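/- For any tripartite density operator ρ_ABC on H_A ⊗ H_B ⊗ H_C, the l1 norm of IQ coherence satisfies C^{AB|C}_{l1}(ρ_ABC) ≥ C^{A|BC}_{l1}(ρ_ABC) + C^{B|C}_{l1}(ρ_BC), where ρ_BC = Tr_A ρ_ABC. -/

import Mathlib

/-!
Write `t(i,m; j,n) = ‖ρ^C_{ij,mn}‖_tr`. Sorting the off-diagonal pairs `(i,m) ≠ (j,n)` by whether
`i ≠ j`, or `i = j` and `m ≠ n`, splits `C^{AB|C}_{l1}(ρ)` into `Σ_{i≠j} Σ_{m,n} t(i,m; j,n)` plus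
`Σ_{m≠n} Σ_i t(i,m; i,n)`. Since `Σ_{m,n} |m⟩⟨n| ⊗ ρ^C_{ij,mn}` and `Σ_i ρ^C_{ii,mn}` are
sums whose summands have trace norms `t(i,m; j,n)` and `t(i,m; i,n)`, the triangle inequality for
the trace norm bounds `C^{A|BC}_{l1}(ρ)` by the first part and `C^{B|C}_{l1}(ρ_BC)` by the second.
The triangle inequality comes from the duality `‖X‖_tr = max {Re Tr (A X) : A Aᴴ ≤ 1}`.
-/
open scoped BigOperators ComplexOrder Kronecker

/-- The positive semidefinite square root of a positive semidefinite matrix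
(removed from Mathlib; restored with its former definition). -/
noncomputable def Matrix.PosSemidef.sqrt {n 𝕜 : Type*} [Fintype n] [DecidableEq n] [RCLike 𝕜]
    {A : Matrix n n 𝕜} (hA : A.PosSemidef) : Matrix n n 𝕜 :=
  hA.1.eigenvectorUnitary.1 * Matrix.diagonal ((↑) ∘ (√·) ∘ hA.1.eigenvalues) *
  (star hA.1.eigenvectorUnitary : Matrix n n 𝕜)

/-- Trace norm: `‖P‖_tr = Tr √(Pᴴ P)`. -/
noncomputable def traceNorm {n : Type*} [Fintype n] [DecidableEq n] (P : Matrix n n ℂ) : ℝ :=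
  ((Matrix.posSemidef_conjTranspose_mul_self P).sqrt.trace).re

/-- The blocks of an operator on H_X ⊗ H_Y with respect to a basis of X. -/
def blockB {X Y : Type*} (Q : Matrix (X × Y) (X × Y) ℂ) (i j : X) : Matrix Y Y ℂ :=
  fun b b' => Q (i, b) (j, b')

/-- l1 norm of IQ coherence C^{X|Y}_{l1}(ρ) = Σ_{i≠j} ‖ρ^Y_{ij}‖_tr. -/
noncomputable def CIQl1 {X Y : Type*} [Fintype X] [Fintype Y] [DecidableEq X] [DecidableEq Y]
    (ρ : Matrix (X × Y) (X × Y) ℂ) : ℝ :=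
  ∑ i, ∑ j, if i = j then 0 else traceNorm (blockB ρ i j)

open Matrix Finset
open scoped MatrixOrder InnerProductSpace

lemma Real.inv_sqrt_mul_self (x : ℝ) : (√x)⁻¹ * x = √x := by
  rcases le_or_gt x 0 with hx | hx
  · simp [Real.sqrt_eq_zero'.mpr hx]
  · rw [inv_mul_eq_div, Real.div_sqrt]

section TraceNorm

variable {𝕜 : Type*} [RCLike 𝕜] {n : Type*} [Fintype n] [DecidableEq n]

lemma Matrix.PosSemidef.sqrt_eq_cfc {A : Matrix n n 𝕜} (hA : A.PosSemidef) :
    hA.sqrt = cfc Real.sqrt A := by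
  rw [hA.1.cfc_eq, IsHermitian.cfc, Unitary.conjStarAlgAut_apply]; rfl

lemma Matrix.trace_eq_sum_inner_toEuclideanLin {ι : Type*} [Fintype ι] (M : Matrix n n 𝕜)
    (b : OrthonormalBasis ι 𝕜 (EuclideanSpace 𝕜 n)) :
    M.trace = ∑ k, ⟪b k, toEuclideanLin M (b k)⟫_𝕜 := by
  rw [← LinearMap.trace_eq_sum_inner, LinearMap.trace_eq_matrix_trace 𝕜 (PiLp.basisFun 2 𝕜 n),
    toEuclideanLin, toLpLin_eq_toLin, LinearMap.toMatrix_toLin]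

lemma Matrix.toEuclideanLin_mul_apply (A B : Matrix n n 𝕜) (u : EuclideanSpace 𝕜 n) :
    toEuclideanLin (A * B) u = toEuclideanLin A (toEuclideanLin B u) := by
  simp [toEuclideanLin]

lemma Matrix.norm_toEuclideanLin_conjTranspose_le {A : Matrix n n 𝕜} (hA : A * Aᴴ ≤ 1)
    (u : EuclideanSpace 𝕜 n) : ‖toEuclideanLin Aᴴ u‖ ≤ ‖u‖ := by
  have hadj : toEuclideanLin Aᴴ = LinearMap.adjoint (toEuclideanLin A) :=
    toEuclideanLin_conjTranspose_eq_adjoint A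
  have hpos := (isPositive_toEuclideanLin_iff.mpr (le_iff.mp hA)).re_inner_nonneg_left u
  have hsub : toEuclideanLin (1 - A * Aᴴ) u = u - toEuclideanLin A (toEuclideanLin Aᴴ u) := by
    simp [toEuclideanLin]
  rw [hsub, inner_sub_left, map_sub, hadj, ← LinearMap.adjoint_inner_right, inner_self_eq_norm_sq,
    inner_self_eq_norm_sq] at hpos
  rw [hadj, ← pow_le_pow_iff_left₀ (norm_nonneg _) (norm_nonneg _) two_ne_zero]
  linarith

lemma Matrix.re_inner_toEuclideanLin_mul_le {A : Matrix n n 𝕜} (hA : A * Aᴴ ≤ 1)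
    (X : Matrix n n 𝕜) {u : EuclideanSpace 𝕜 n} (hu : ‖u‖ = 1) :
    RCLike.re ⟪u, toEuclideanLin (A * X) u⟫_𝕜 ≤ ‖toEuclideanLin X u‖ :=
  calc RCLike.re ⟪u, toEuclideanLin (A * X) u⟫_𝕜
      = RCLike.re ⟪toEuclideanLin Aᴴ u, toEuclideanLin X u⟫_𝕜 := by
        rw [toEuclideanLin_mul_apply, toEuclideanLin_conjTranspose_eq_adjoint,
          LinearMap.adjoint_inner_left]
    _ ≤ ‖toEuclideanLin Aᴴ u‖ * ‖toEuclideanLin X u‖ := re_inner_le_norm _ _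
    _ ≤ ‖toEuclideanLin X u‖ := by
        simpa [hu] using mul_le_mul_of_nonneg_right (norm_toEuclideanLin_conjTranspose_le hA u)
          (norm_nonneg (toEuclideanLin X u))

lemma Matrix.norm_toEuclideanLin_eigenvectorBasis (X : Matrix n n 𝕜) (k : n) :
    ‖toEuclideanLin X ((posSemidef_conjTranspose_mul_self X).1.eigenvectorBasis k)‖
      = √((posSemidef_conjTranspose_mul_self X).1.eigenvalues k) := by
  set hP := posSemidef_conjTranspose_mul_self X
  set b := hP.1.eigenvectorBasis
  have hb : toEuclideanLin (Xᴴ * X) (b k) = (hP.1.eigenvalues k : 𝕜) • b k := by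
    rw [toEuclideanLin, toLpLin_apply, hP.1.mulVec_eigenvectorBasis, ← RCLike.real_smul_eq_coe_smul,
      WithLp.toLp_smul, WithLp.toLp_ofLp]
  rw [eq_comm, Real.sqrt_eq_iff_eq_sq (hP.eigenvalues_nonneg k) (norm_nonneg _),
    ← inner_self_eq_norm_sq (𝕜 := 𝕜), ← LinearMap.adjoint_inner_right,
    ← toEuclideanLin_conjTranspose_eq_adjoint, ← toEuclideanLin_mul_apply, hb, inner_smul_right,
    inner_self_eq_norm_sq_to_K, b.norm_eq_one]
  simp

lemma CFC.sqrt_kronecker {m : Type*} [Fintype m] [DecidableEq m] {P : Matrix m m 𝕜}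
    {Q : Matrix n n 𝕜} (hP : P.PosSemidef) (hQ : Q.PosSemidef) :
    CFC.sqrt (P ⊗ₖ Q) = CFC.sqrt P ⊗ₖ CFC.sqrt Q := by
  refine CFC.sqrt_unique ?_ ?_
  · rw [← mul_kronecker_mul, CFC.sqrt_mul_sqrt_self P hP.nonneg,
      CFC.sqrt_mul_sqrt_self Q hQ.nonneg]
  · exact nonneg_iff_posSemidef.mpr <| (nonneg_iff_posSemidef.mp (CFC.sqrt_nonneg P)).kronecker
      (nonneg_iff_posSemidef.mp (CFC.sqrt_nonneg Q))

lemma traceNorm_eq_sum_sqrt_eigenvalues (X : Matrix n n ℂ) :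
    traceNorm X = ∑ k, √((posSemidef_conjTranspose_mul_self X).1.eigenvalues k) := by
  rw [traceNorm, PosSemidef.sqrt, trace_mul_cycle, Unitary.coe_star_mul_self, one_mul,
    trace_diagonal, Complex.re_sum]
  simp

lemma traceNorm_eq_re_trace_sqrt (X : Matrix n n ℂ) :
    traceNorm X = (CFC.sqrt (Xᴴ * X)).trace.re := by
  have hP := posSemidef_conjTranspose_mul_self X
  rw [traceNorm, hP.sqrt_eq_cfc, CFC.sqrt_eq_real_sqrt _ hP.nonneg, cfcₙ_eq_cfc]

lemma re_trace_mul_le_traceNorm {A : Matrix n n ℂ} (hA : A * Aᴴ ≤ 1) (X : Matrix n n ℂ) :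
    (A * X).trace.re ≤ traceNorm X := by
  set hP := posSemidef_conjTranspose_mul_self X
  rw [trace_eq_sum_inner_toEuclideanLin _ hP.1.eigenvectorBasis, Complex.re_sum,
    traceNorm_eq_sum_sqrt_eigenvalues]
  gcongr with k
  rw [← norm_toEuclideanLin_eigenvectorBasis]
  exact re_inner_toEuclideanLin_mul_le hA X (hP.1.eigenvectorBasis.norm_eq_one k)

/-- Witness: `A = (Xᴴ X)^{-1/2} Xᴴ`, where `(√0)⁻¹ = 0` makes the inverse square root vanish on the
kernel of `Xᴴ X`. -/
lemma exists_re_trace_mul_eq_traceNorm (X : Matrix n n ℂ) :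
    ∃ A : Matrix n n ℂ, A * Aᴴ ≤ 1 ∧ (A * X).trace.re = traceNorm X := by
  set hP := posSemidef_conjTranspose_mul_self X
  have hcont (f : ℝ → ℝ) : ContinuousOn f (spectrum ℝ (Xᴴ * X)) :=
    finite_real_spectrum.continuousOn f
  set R := cfc (fun x : ℝ => (√x)⁻¹) (Xᴴ * X)
  have hR : Rᴴ = R := IsSelfAdjoint.cfc
  refine ⟨R * Xᴴ, ?_, ?_⟩
  · have hRR : R * Xᴴ * (R * Xᴴ)ᴴ = cfc (fun x : ℝ => (√x)⁻¹ * x * (√x)⁻¹) (Xᴴ * X) := by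
      rw [cfc_mul _ _ _ (hcont _) (hcont _), cfc_mul _ _ _ (hcont _) (hcont _), cfc_id' ℝ _,
        conjTranspose_mul, conjTranspose_conjTranspose, hR]
      simp only [mul_assoc]; rfl
    rw [hRR]
    refine cfc_le_one _ _ fun x _ => ?_
    rw [Real.inv_sqrt_mul_self]
    exact mul_inv_le_one
  · have hRX : R * Xᴴ * X = cfc Real.sqrt (Xᴴ * X) := by
      conv_lhs => rw [mul_assoc, ← cfc_id' ℝ (Xᴴ * X), ← cfc_mul _ _ _ (hcont _) (hcont _)]
      simp only [Real.inv_sqrt_mul_self]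
    rw [hRX, traceNorm, hP.sqrt_eq_cfc]

lemma traceNorm_add_le (X Y : Matrix n n ℂ) :
    traceNorm (X + Y) ≤ traceNorm X + traceNorm Y := by
  obtain ⟨A, hA, hAXY⟩ := exists_re_trace_mul_eq_traceNorm (X + Y)
  rw [← hAXY, mul_add, trace_add, Complex.add_re]
  exact add_le_add (re_trace_mul_le_traceNorm hA X) (re_trace_mul_le_traceNorm hA Y)

lemma traceNorm_zero : traceNorm (0 : Matrix n n ℂ) = 0 := by
  obtain ⟨A, -, hA0⟩ := exists_re_trace_mul_eq_traceNorm (0 : Matrix n n ℂ)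
  simpa using hA0.symm

lemma traceNorm_sum_le {ι : Type*} (s : Finset ι) (f : ι → Matrix n n ℂ) :
    traceNorm (∑ i ∈ s, f i) ≤ ∑ i ∈ s, traceNorm (f i) :=
  le_sum_of_subadditive _ traceNorm_zero.le traceNorm_add_le s f

lemma traceNorm_kronecker {m : Type*} [Fintype m] [DecidableEq m] (X : Matrix m m ℂ)
    (Y : Matrix n n ℂ) : traceNorm (X ⊗ₖ Y) = traceNorm X * traceNorm Y := by
  have hX := nonneg_iff_posSemidef.mp (CFC.sqrt_nonneg (Xᴴ * X))
  simp only [traceNorm_eq_re_trace_sqrt, conjTranspose_kronecker, ← mul_kronecker_mul,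
    CFC.sqrt_kronecker (posSemidef_conjTranspose_mul_self X) (posSemidef_conjTranspose_mul_self Y),
    trace_kronecker, Complex.mul_re]
  rw [← (Complex.nonneg_iff.mp hX.trace_nonneg).2, zero_mul, sub_zero]

lemma traceNorm_single_one (i j : n) : traceNorm (single i j (1 : ℂ)) = 1 := by
  have hjj : (single j j (1 : ℂ)).PosSemidef := by
    rw [← diagonal_single, posSemidef_diagonal_iff]
    exact Pi.single_nonneg.mpr zero_le_one
  rw [traceNorm_eq_re_trace_sqrt, conjTranspose_single, star_one, single_mul_single_same, mul_one,
    CFC.sqrt_unique (by rw [single_mul_single_same, mul_one]) (nonneg_iff_posSemidef.mpr hjj),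
    trace_single_eq_same, Complex.one_re]

end TraceNorm

lemma sum_single_kronecker_blockB {B C : Type*} [Fintype B] [DecidableEq B]
    (Q : Matrix (B × C) (B × C) ℂ) :
    ∑ m, ∑ n, single m n (1 : ℂ) ⊗ₖ blockB Q m n = Q := by
  ext ⟨a, c⟩ ⟨b, c'⟩
  simp [Matrix.sum_apply, single_apply, blockB, ite_and]

lemma traceNorm_le_sum_traceNorm_blockB {B C : Type*} [Fintype B] [Fintype C] [DecidableEq B]
    [DecidableEq C] (Q : Matrix (B × C) (B × C) ℂ) :
    traceNorm Q ≤ ∑ m, ∑ n, traceNorm (blockB Q m n) :=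
  calc traceNorm Q = traceNorm (∑ m, ∑ n, single m n (1 : ℂ) ⊗ₖ blockB Q m n) := by
        rw [sum_single_kronecker_blockB]
    _ ≤ ∑ m, traceNorm (∑ n, single m n (1 : ℂ) ⊗ₖ blockB Q m n) := traceNorm_sum_le _ _
    _ ≤ ∑ m, ∑ n, traceNorm (single m n (1 : ℂ) ⊗ₖ blockB Q m n) :=
        sum_le_sum fun m _ => traceNorm_sum_le _ _
    _ = ∑ m, ∑ n, traceNorm (blockB Q m n) := by
        simp only [traceNorm_kronecker, traceNorm_single_one, one_mul]

lemma sum_ite_ne_prod {M α β : Type*} [AddCommMonoid M] [Fintype α] [Fintype β] [DecidableEq α]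
    [DecidableEq β] (f : α × β → α × β → M) :
    ∑ p, ∑ q, (if p = q then 0 else f p q) =
      (∑ i, ∑ j, if i = j then 0 else ∑ m, ∑ n, f (i, m) (j, n)) +
        ∑ m, ∑ n, if m = n then 0 else ∑ i, f (i, m) (i, n) := by
  have hsplit (p q : α × β) : (if p = q then 0 else f p q) =
      (if p.1 = q.1 then 0 else f p q) + if p.1 = q.1 ∧ p.2 ≠ q.2 then f p q else 0 := by
    obtain ⟨i, m⟩ := p; obtain ⟨j, n⟩ := q
    by_cases hij : i = j <;> by_cases hmn : m = n <;> simp [hij, hmn]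
  simp only [hsplit, sum_add_distrib, Fintype.sum_prod_type]
  congr 1
  · refine sum_congr rfl fun i _ => ?_
    rw [sum_comm]
    refine sum_congr rfl fun j _ => ?_
    split_ifs <;> simp
  · have hdiag (i : α) (m : β) : ∑ j, ∑ n, (if i = j ∧ m ≠ n then f (i, m) (j, n) else 0) =
        ∑ n, if m = n then 0 else f (i, m) (i, n) := by
      rw [Fintype.sum_eq_single i fun j hj => sum_eq_zero fun n _ => if_neg fun h => hj h.1.symm]
      exact sum_congr rfl fun n _ => by by_cases hmn : m = n <;> simp [hmn]
    simp only [hdiag]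
    rw [sum_comm]
    refine sum_congr rfl fun m _ => ?_
    rw [sum_comm]
    refine sum_congr rfl fun n _ => ?_
    split_ifs <;> simp

theorem CIQl1_tripartite_general {A B C : Type*} [Fintype A] [Fintype B] [Fintype C]
    [DecidableEq A] [DecidableEq B] [DecidableEq C]
    (ρ : Matrix ((A × B) × C) ((A × B) × C) ℂ) :
    CIQl1 ρ ≥
      (∑ i : A, ∑ j : A, if i = j then 0 else
        traceNorm ((Matrix.of fun mc nc =>
          ρ ((i, mc.1), mc.2) ((j, nc.1), nc.2)) : Matrix (B × C) (B × C) ℂ)) +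
      CIQl1 ((Matrix.of fun mc nc =>
        ∑ i : A, ρ ((i, mc.1), mc.2) ((i, nc.1), nc.2)) : Matrix (B × C) (B × C) ℂ) := by
  unfold CIQl1
  rw [ge_iff_le, sum_ite_ne_prod]
  refine add_le_add (sum_le_sum fun i _ => sum_le_sum fun j _ => ?_)
    (sum_le_sum fun m _ => sum_le_sum fun n _ => ?_) <;> split_ifs
  · exact le_rfl
  · exact traceNorm_le_sum_traceNorm_blockB _
  · exact le_rfl
  · have hblock : blockB (Matrix.of fun mc nc => ∑ i : A, ρ ((i, mc.1), mc.2) ((i, nc.1), nc.2) :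
        Matrix (B × C) (B × C) ℂ) m n = ∑ i, blockB ρ (i, m) (i, n) := by
      ext c c'
      simp [blockB, Matrix.sum_apply]
    exact hblock ▸ traceNorm_sum_le _ _

/-- for a tripartite state (indexed by (A × B) × C, so the AB|C blocks are the
generic ones), C^{AB|C}_{l1}(ρ_ABC) ≥ C^{A|BC}_{l1}(ρ_ABC) + C^{B|C}_{l1}(ρ_BC),
where ρ_BC = Tr_A ρ_ABC and C^{A|BC} uses the blocks of ρ_ABC over the A-basis. -/
theorem CIQl1_tripartite {A B C : Type*} [Fintype A] [Fintype B] [Fintype C]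
    [DecidableEq A] [DecidableEq B] [DecidableEq C]
    (ρ : Matrix ((A × B) × C) ((A × B) × C) ℂ) (hρ : ρ.PosSemidef) (hTr : ρ.trace = 1) :
    CIQl1 ρ ≥
      (∑ i : A, ∑ j : A, if i = j then 0 else
        traceNorm ((Matrix.of fun mc nc =>
          ρ ((i, mc.1), mc.2) ((j, nc.1), nc.2)) : Matrix (B × C) (B × C) ℂ)) +
      CIQl1 ((Matrix.of fun mc nc =>
        ∑ i : A, ρ ((i, mc.1), mc.2) ((i, nc.1), nc.2)) : Matrix (B × C) (B × C) ℂ) :=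
  CIQl1_tripartite_general ρ
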